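/- arXiv:0810.4567 — 2 statements merged into one kernel-verified Lean document; each statement's English description precedes it below -/
import Mathlib

section
/- Let Λ be a finitely-aligned k-graph, let v be a vertex, F ⊆ vΛ a finite exhaustive set, and η ∈ vΛ. Then Ext(η; F) := ⋃_{λ ∈ F} {α : (α, β) ∈ Λ^min(η, λ) for some β} is a finite exhaustive subset of s(η)Λ. -/
/-- A `k`-graph: a countable small category `Λ` with a degree functor
`d : Λ → ℕ^k` satisfying the unique factorization property. -/
structure KGraph (k : ℕ) where
  Obj : Type
  Mor : Type
  obj_countable : Countable Obj
  mor_countable : Countable Mor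
  r : Mor → Obj
  s : Mor → Obj
  ide : Obj → Mor
  comp : Mor → Mor → Mor
  r_ide : ∀ v, r (ide v) = v
  s_ide : ∀ v, s (ide v) = v
  r_comp : ∀ μ ν, s μ = r ν → r (comp μ ν) = r μ
  s_comp : ∀ μ ν, s μ = r ν → s (comp μ ν) = s ν
  ide_comp : ∀ μ, comp (ide (r μ)) μ = μ
  comp_ide : ∀ μ, comp μ (ide (s μ)) = μ
  comp_assoc : ∀ μ ν ρ, s μ = r ν → s ν = r ρ →
    comp (comp μ ν) ρ = comp μ (comp ν ρ)
  d : Mor → Fin k → ℕ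
  d_ide : ∀ v, d (ide v) = 0
  d_comp : ∀ μ ν, s μ = r ν → d (comp μ ν) = d μ + d ν
  factor : ∀ (lam : Mor) (m n : Fin k → ℕ), d lam = m + n →
    ∃! p : Mor × Mor, s p.1 = r p.2 ∧ comp p.1 p.2 = lam ∧ d p.1 = m ∧ d p.2 = n

namespace KGraph

variable {k : ℕ} {Λ : KGraph k}

/-- The set `Λ^min(λ,μ)` of minimal common extensions of `λ` and `μ`. -/
def MinExt (Λ : KGraph k) (lam mu : Λ.Mor) : Set (Λ.Mor × Λ.Mor) :=
  {p | Λ.s lam = Λ.r p.1 ∧ Λ.s mu = Λ.r p.2 ∧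
    Λ.comp lam p.1 = Λ.comp mu p.2 ∧
    Λ.d (Λ.comp lam p.1) = Λ.d lam ⊔ Λ.d mu}

/-- `Λ` is finitely aligned if all `Λ^min(λ,μ)` are finite. -/
def FinitelyAligned (Λ : KGraph k) : Prop :=
  ∀ lam mu : Λ.Mor, (Λ.MinExt lam mu).Finite

/-- `E ⊆ vΛ` is exhaustive. -/
def Exhaustive (Λ : KGraph k) (v : Λ.Obj) (E : Set Λ.Mor) : Prop :=
  (∀ lam ∈ E, Λ.r lam = v) ∧
  ∀ mu : Λ.Mor, Λ.r mu = v → ∃ lam ∈ E, (Λ.MinExt lam mu).Nonempty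

/-- `Ext(η; F)`. -/
def ExtSet (Λ : KGraph k) (η : Λ.Mor) (F : Set Λ.Mor) : Set Λ.Mor :=
  ⋃ lam ∈ F, {α | ∃ β, (α, β) ∈ Λ.MinExt η lam}

/-- `Λ` has no sources: `vΛ^{e_i} ≠ ∅` for all `v`, `i`. -/
def NoSources (Λ : KGraph k) : Prop :=
  ∀ (v : Λ.Obj) (i : Fin k), ∃ lam : Λ.Mor, Λ.r lam = v ∧ Λ.d lam = Pi.single i 1

end KGraph

/-- A path in `Λ`, i.e. a degree-preserving functor `x : Ω_{k,m} → Λ`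
where `m = deg x ∈ (ℕ ∪ {∞})^k`.  `vert p = x(p)` and `seg p q = x(p,q)`
for `p ≤ q ≤ deg x` (values outside that range are irrelevant junk). -/
structure KPath {k : ℕ} (Λ : KGraph k) where
  deg : Fin k → ℕ∞
  vert : (Fin k → ℕ) → Λ.Obj
  seg : (Fin k → ℕ) → (Fin k → ℕ) → Λ.Mor
  r_seg : ∀ p q, p ≤ q → (∀ i, (q i : ℕ∞) ≤ deg i) → Λ.r (seg p q) = vert p
  s_seg : ∀ p q, p ≤ q → (∀ i, (q i : ℕ∞) ≤ deg i) → Λ.s (seg p q) = vert q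
  d_seg : ∀ p q, p ≤ q → (∀ i, (q i : ℕ∞) ≤ deg i) → Λ.d (seg p q) = q - p
  comp_seg : ∀ p q r, p ≤ q → q ≤ r → (∀ i, (r i : ℕ∞) ≤ deg i) →
    Λ.comp (seg p q) (seg q r) = seg p r

namespace KPath

variable {k : ℕ} {Λ : KGraph k}

/-- `n ≤ d(x)`. -/
def DegLe (x : KPath Λ) (n : Fin k → ℕ) : Prop :=
  ∀ i, (n i : ℕ∞) ≤ x.deg i

private lemma enat_aux {n q : ℕ} {D : ℕ∞} (h1 : (n : ℕ∞) ≤ D)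
    (h2 : (q : ℕ∞) ≤ D - n) : ((n + q : ℕ) : ℕ∞) ≤ D := by
  induction D using ENat.recTopCoe with
  | top => exact le_top
  | coe dd =>
    rw [← ENat.coe_sub] at h2
    have h1' : n ≤ dd := by exact_mod_cast h1
    have h2' : q ≤ dd - n := by exact_mod_cast h2
    exact_mod_cast (by omega : n + q ≤ dd)

/-- The shift `σⁿ x`, defined when `n ≤ d(x)`. -/
def shift (x : KPath Λ) (n : Fin k → ℕ) (h : x.DegLe n) : KPath Λ where
  deg i := x.deg i - n i
  vert p := x.vert (n + p)
  seg p q := x.seg (n + p) (n + q)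
  r_seg p q hpq hq :=
    x.r_seg _ _ (add_le_add le_rfl hpq) (fun i => enat_aux (h i) (hq i))
  s_seg p q hpq hq :=
    x.s_seg _ _ (add_le_add le_rfl hpq) (fun i => enat_aux (h i) (hq i))
  d_seg p q hpq hq := by
    rw [x.d_seg _ _ (add_le_add le_rfl hpq) (fun i => enat_aux (h i) (hq i))]
    funext i
    simp only [Pi.sub_apply, Pi.add_apply]
    omega
  comp_seg p q r hpq hqr hr :=
    x.comp_seg _ _ _ (add_le_add le_rfl hpq) (add_le_add le_rfl hqr)
      (fun i => enat_aux (h i) (hr i))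

/-- `σᵐ x = σⁿ x` (in particular both shifts are defined). -/
def ShiftsEq (x : KPath Λ) (m n : Fin k → ℕ) : Prop :=
  ∃ (hm : x.DegLe m) (hn : x.DegLe n), x.shift m hm = x.shift n hn

/-- `x` is a boundary path: for all `n ≤ d(x)` and every finite exhaustive
`E ⊆ x(n)Λ` there is `λ ∈ E` with `x(n, n + d(λ)) = λ`. -/
def IsBoundary (x : KPath Λ) : Prop :=
  ∀ n : Fin k → ℕ, x.DegLe n →
    ∀ E : Set Λ.Mor, E.Finite → Λ.Exhaustive (x.vert n) E →
      ∃ lam ∈ E, x.DegLe (n + Λ.d lam) ∧ x.seg n (n + Λ.d lam) = lam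

/-- `y = λ x`: `y` is the extension of the path `x` by the morphism `λ`. -/
structure IsExtension (lam : Λ.Mor) (x y : KPath Λ) : Prop where
  deg_eq : y.deg = fun i => (Λ.d lam i : ℕ∞) + x.deg i
  seg_eq : y.seg 0 (Λ.d lam) = lam
  shift_eq : ∀ h : y.DegLe (Λ.d lam), y.shift (Λ.d lam) h = x

end KPath

namespace KGraph

variable {k : ℕ}

/-- `Λ` has no local periodicity (NLP). -/
def NLP (Λ : KGraph k) : Prop :=
  ∀ (v : Λ.Obj) (m n : Fin k → ℕ), m ≠ n →
    ∃ x : KPath Λ, x.IsBoundary ∧ x.vert 0 = v ∧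
      (¬ x.DegLe (m ⊔ n) ∨ ¬ x.ShiftsEq m n)

/-- `Λ` has strong no local periodicity (SNLP). -/
def SNLP (Λ : KGraph k) : Prop :=
  ∀ (v : Λ.Obj) (m n : Fin k → ℕ), m ≠ n →
    ∃ x : KPath Λ, x.IsBoundary ∧ x.vert 0 = v ∧
      x.DegLe (m ⊔ n) ∧ ¬ x.ShiftsEq m n

/-- `Λ` satisfies the aperiodicity condition at `v`. -/
def AperiodicAt (Λ : KGraph k) (v : Λ.Obj) : Prop :=
  ∃ x : KPath Λ, x.IsBoundary ∧ x.vert 0 = v ∧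
    ∀ (m n : Fin k → ℕ) (hm : x.DegLe m) (hn : x.DegLe n),
      x.shift m hm = x.shift n hn → m = n

/-- `Λ` satisfies the aperiodicity condition. -/
def Aperiodic (Λ : KGraph k) : Prop := ∀ v : Λ.Obj, Λ.AperiodicAt v

/-- `Λ` has local periodicity `n, m` at `v`. -/
def LocalPeriodicity (Λ : KGraph k) (v : Λ.Obj) (n m : Fin k → ℕ) : Prop :=
  ∀ x : KPath Λ, x.IsBoundary → x.vert 0 = v →
    x.DegLe (m ⊔ n) ∧ x.ShiftsEq n m

/-- Condition B of Farthing–Muhly–Yeend. -/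
def ConditionB (Λ : KGraph k) : Prop :=
  ∀ v : Λ.Obj, ∃ x : KPath Λ, x.IsBoundary ∧ x.vert 0 = v ∧
    ∀ (lam mu : Λ.Mor) (y₁ y₂ : KPath Λ), Λ.s lam = v → Λ.s mu = v → lam ≠ mu →
      KPath.IsExtension lam x y₁ → KPath.IsExtension mu x y₂ → y₁ ≠ y₂

/-- `H ⊆ Λ⁰` is hereditary. -/
def Hereditary (Λ : KGraph k) (H : Set Λ.Obj) : Prop :=
  ∀ lam : Λ.Mor, Λ.r lam ∈ H → Λ.s lam ∈ H

/-- `H ⊆ Λ⁰` is saturated. -/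
def Saturated (Λ : KGraph k) (H : Set Λ.Obj) : Prop :=
  ∀ (v : Λ.Obj) (F : Set Λ.Mor), F.Finite → Λ.Exhaustive v F →
    (∀ lam ∈ F, Λ.s lam ∈ H) → v ∈ H

/-- `Λ` is cofinal. -/
def Cofinal (Λ : KGraph k) : Prop :=
  ∀ v : Λ.Obj, ∃ (x : KPath Λ) (n : Fin k → ℕ), x.IsBoundary ∧ x.DegLe n ∧
    ∃ lam : Λ.Mor, Λ.r lam = v ∧ Λ.s lam = x.vert n

end KGraph

namespace KGraph

variable {k : ℕ} {Λ : KGraph k}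

theorem exists_comp_eq_of_le_d {σ : Λ.Mor} {m : Fin k → ℕ} (hm : m ≤ Λ.d σ) :
    ∃ α σ', Λ.s α = Λ.r σ' ∧ Λ.comp α σ' = σ ∧ Λ.d α = m := by
  obtain ⟨⟨α, σ'⟩, ⟨hs, hc, hd, -⟩, -⟩ :=
    Λ.factor σ m (Λ.d σ - m) (add_tsub_cancel_of_le hm).symm
  exact ⟨α, σ', hs, hc, hd⟩

theorem eq_of_comp_eq_of_d_eq {a b c e : Λ.Mor} (hab : Λ.s a = Λ.r b)
    (hce : Λ.s c = Λ.r e) (h : Λ.comp a b = Λ.comp c e) (hd : Λ.d a = Λ.d c) :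
    a = c := by
  have hde : Λ.d e = Λ.d b := by
    have := Λ.d_comp c e hce
    rw [← h, Λ.d_comp a b hab, hd] at this
    exact (add_left_cancel this).symm
  have := (Λ.factor (Λ.comp a b) (Λ.d a) (Λ.d b) (Λ.d_comp a b hab)).unique
    (y₁ := (a, b)) (y₂ := (c, e)) ⟨hab, rfl, rfl, rfl⟩ ⟨hce, h.symm, hd.symm, hde⟩
  exact congrArg Prod.fst this

/- Cut `σ` and `ρ` so that `η α` and `λ β` both have degree `d(η) ∨ d(λ)`; they are then
initial segments of the same path of the same degree, hence equal by unique factorisation. -/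
theorem exists_minExt_of_comp_eq {η lam σ ρ : Λ.Mor} (hσ : Λ.s η = Λ.r σ)
    (hρ : Λ.s lam = Λ.r ρ) (heq : Λ.comp η σ = Λ.comp lam ρ) :
    ∃ α β σ', (α, β) ∈ Λ.MinExt η lam ∧ Λ.s α = Λ.r σ' ∧ Λ.comp α σ' = σ := by
  set N := Λ.d η ⊔ Λ.d lam
  have hdτ : Λ.d η + Λ.d σ = Λ.d lam + Λ.d ρ := by
    rw [← Λ.d_comp η σ hσ, ← Λ.d_comp lam ρ hρ, heq]
  have hNσ : N - Λ.d η ≤ Λ.d σ :=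
    tsub_le_iff_left.2 (sup_le le_self_add (hdτ ▸ le_self_add))
  have hNρ : N - Λ.d lam ≤ Λ.d ρ :=
    tsub_le_iff_left.2 (sup_le (hdτ ▸ le_self_add) le_self_add)
  obtain ⟨α, σ', hασ', rfl, hdα⟩ := exists_comp_eq_of_le_d hNσ
  obtain ⟨β, ρ', hβρ', rfl, hdβ⟩ := exists_comp_eq_of_le_d hNρ
  have hηα : Λ.s η = Λ.r α := by rw [hσ, Λ.r_comp α σ' hασ']
  have hlamβ : Λ.s lam = Λ.r β := by rw [hρ, Λ.r_comp β ρ' hβρ']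
  have hdηα : Λ.d (Λ.comp η α) = N := by
    rw [Λ.d_comp η α hηα, hdα, add_tsub_cancel_of_le le_sup_left]
  have hdlamβ : Λ.d (Λ.comp lam β) = N := by
    rw [Λ.d_comp lam β hlamβ, hdβ, add_tsub_cancel_of_le le_sup_right]
  have hcomp : Λ.comp η α = Λ.comp lam β := by
    refine eq_of_comp_eq_of_d_eq (by rwa [Λ.s_comp η α hηα])
      (by rwa [Λ.s_comp lam β hlamβ]) ?_ (hdηα.trans hdlamβ.symm)
    rwa [Λ.comp_assoc η α σ' hηα hασ', Λ.comp_assoc lam β ρ' hlamβ hβρ']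
  exact ⟨α, β, σ', ⟨hηα, hlamβ, hcomp, hdηα⟩, hασ', rfl⟩

theorem minExt_nonempty_of_comp_eq {η lam σ ρ : Λ.Mor} (hσ : Λ.s η = Λ.r σ)
    (hρ : Λ.s lam = Λ.r ρ) (heq : Λ.comp η σ = Λ.comp lam ρ) :
    (Λ.MinExt η lam).Nonempty :=
  let ⟨α, β, _, hmem, _⟩ := exists_minExt_of_comp_eq hσ hρ heq
  ⟨(α, β), hmem⟩

theorem mem_extSet {η α : Λ.Mor} {F : Set Λ.Mor} :
    α ∈ Λ.ExtSet η F ↔ ∃ lam ∈ F, ∃ β, (α, β) ∈ Λ.MinExt η lam := by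
  simp [ExtSet]

theorem extSet_eq_biUnion_image_fst (η : Λ.Mor) (F : Set Λ.Mor) :
    Λ.ExtSet η F = ⋃ lam ∈ F, Prod.fst '' Λ.MinExt η lam := by
  ext α
  simp [ExtSet]

theorem FinitelyAligned.extSet_finite (hFA : Λ.FinitelyAligned) (η : Λ.Mor)
    {F : Set Λ.Mor} (hF : F.Finite) : (Λ.ExtSet η F).Finite := by
  rw [extSet_eq_biUnion_image_fst]
  exact hF.biUnion fun lam _ => (hFA η lam).image Prod.fst

theorem Exhaustive.extSet {v : Λ.Obj} {F : Set Λ.Mor} (hF : Λ.Exhaustive v F)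
    {η : Λ.Mor} (hη : Λ.r η = v) : Λ.Exhaustive (Λ.s η) (Λ.ExtSet η F) := by
  refine ⟨fun α hα => ?_, fun μ hμ => ?_⟩
  · obtain ⟨lam, -, β, hηα, -⟩ := mem_extSet.1 hα
    exact hηα.symm
  · have hημ : Λ.s η = Λ.r μ := hμ.symm
    obtain ⟨lam, hlam, ⟨ζ, ξ⟩, hζ, hξ, hcomp, -⟩ :=
      hF.2 (Λ.comp η μ) (by rw [Λ.r_comp η μ hημ, hη])
    rw [Λ.s_comp η μ hημ] at hξ
    -- `η (μ ξ) = λ ζ` factors as `μ ξ = α σ'` with `α ∈ Ext(η; F)`; then `α σ' = μ ξ` meets `μ`.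
    obtain ⟨α, β, σ', hmin, hασ', hfac⟩ := exists_minExt_of_comp_eq
      (by rwa [Λ.r_comp μ ξ hξ]) hζ (by rw [← Λ.comp_assoc η μ ξ hημ hξ, hcomp])
    exact ⟨α, mem_extSet.2 ⟨lam, hlam, β, hmin⟩, minExt_nonempty_of_comp_eq hασ' hξ hfac⟩

end KGraph

theorem stmt5 {k : ℕ} (Λ : KGraph k) (hFA : Λ.FinitelyAligned) (v : Λ.Obj)
    (F : Set Λ.Mor) (hFfin : F.Finite) (hFex : Λ.Exhaustive v F)
    (η : Λ.Mor) (hη : Λ.r η = v) :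
    (Λ.ExtSet η F).Finite ∧ Λ.Exhaustive (Λ.s η) (Λ.ExtSet η F) :=
  ⟨hFA.extSet_finite η hFfin, hFex.extSet hη⟩
end

section
/- Let Λ be a finitely-aligned k-graph without sources. If Λ has local periodicity n, m at a vertex v (i.e., every boundary path x with range v satisfies d(x) ≥ m ∨ n and σⁿx = σᵐx), and y is any boundary path with range x(n) for some infinite path x ∈ vΛ^∞ such that d(y) ≥ (m∨n − m) ∨ (m∨n − n), then σ^{m∨n−m} y = σ^{m∨n−n} y. -/
/-! Concatenating `x(0, n)` with `y` gives a path `z = x(0, n) y` with range `v` and `σⁿ z = y`.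
It is a boundary path: for a finite exhaustive `E` at `z(p)`, the set `Ext(z(p, p ∨ n); E)` is
finite (finite alignment) and exhaustive at a vertex of `y`, so `y` follows one of its elements,
and the minimal common extension it comes from shows that `z` follows an element of `E`.
Local periodicity at `v` gives `σⁿ z = σᵐ z`, hence `σ^{m∨n−m} y = σ^{m∨n} z = σ^{m∨n−n} y`. -/

namespace KGraph

variable {k : ℕ} {Λ : KGraph k}

theorem eq_and_eq_of_comp_eq {μ₁ ν₁ μ₂ ν₂ : Λ.Mor} (h₁ : Λ.s μ₁ = Λ.r ν₁)
    (h₂ : Λ.s μ₂ = Λ.r ν₂) (h : Λ.comp μ₁ ν₁ = Λ.comp μ₂ ν₂) (hd : Λ.d μ₁ = Λ.d μ₂) :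
    μ₁ = μ₂ ∧ ν₁ = ν₂ := by
  have hd' : Λ.d ν₁ = Λ.d ν₂ := by
    have := Λ.d_comp _ _ h₁
    rw [h, Λ.d_comp _ _ h₂, hd] at this
    exact (add_left_cancel this).symm
  have := (Λ.factor _ _ _ (Λ.d_comp _ _ h₁)).unique (y₁ := (μ₁, ν₁)) (y₂ := (μ₂, ν₂))
    ⟨h₁, rfl, rfl, rfl⟩ ⟨h₂, h.symm, hd.symm, hd'.symm⟩
  exact Prod.ext_iff.mp this

theorem exists_factor (τ : Λ.Mor) {a b : Fin k → ℕ} (h : Λ.d τ = a + b) :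
    ∃ α β : Λ.Mor, Λ.s α = Λ.r β ∧ Λ.comp α β = τ ∧ Λ.d α = a ∧ Λ.d β = b :=
  let ⟨⟨α, β⟩, hαβ, _⟩ := Λ.factor τ a b h
  ⟨α, β, hαβ⟩

theorem eq_ide_of_d_eq_zero {μ : Λ.Mor} (h : Λ.d μ = 0) : μ = Λ.ide (Λ.r μ) :=
  (eq_and_eq_of_comp_eq (μ₂ := Λ.ide (Λ.r μ)) (Λ.r_ide _).symm (Λ.s_ide _)
    (by rw [Λ.comp_ide, Λ.ide_comp]) (by rw [h, Λ.d_ide])).1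

theorem s_eq_r_of_d_eq_zero {μ : Λ.Mor} (h : Λ.d μ = 0) : Λ.s μ = Λ.r μ := by
  rw [eq_ide_of_d_eq_zero h, Λ.s_ide, Λ.r_ide]

theorem exists_comp_eq_of_comp_eq_comp {ν ρ θ t : Λ.Mor} (hνρ : Λ.s ν = Λ.r ρ)
    (hθt : Λ.s θ = Λ.r t) (h : Λ.comp ν ρ = Λ.comp θ t) (hle : Λ.d ν ≤ Λ.d θ) :
    ∃ w : Λ.Mor, Λ.s ν = Λ.r w ∧ Λ.comp ν w = θ ∧ Λ.s w = Λ.r t ∧ Λ.comp w t = ρ := by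
  obtain ⟨ν', w, hν'w, rfl, hdν', -⟩ :=
    Λ.exists_factor θ (add_tsub_cancel_of_le hle).symm
  have hwt : Λ.s w = Λ.r t := by rwa [← Λ.s_comp _ _ hν'w]
  obtain ⟨rfl, hρ⟩ := eq_and_eq_of_comp_eq hνρ (by rwa [Λ.r_comp _ _ hwt])
    (h.trans (Λ.comp_assoc _ _ _ hν'w hwt)) hdν'.symm
  exact ⟨w, hν'w, rfl, hwt, hρ.symm⟩

theorem exists_minExt_of_comp_eq_s7 {α ρ μ σ : Λ.Mor} (hαρ : Λ.s α = Λ.r ρ)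
    (hμσ : Λ.s μ = Λ.r σ) (h : Λ.comp α ρ = Λ.comp μ σ) :
    ∃ p ∈ Λ.MinExt α μ, ∃ t, Λ.s p.1 = Λ.r t ∧ Λ.comp p.1 t = ρ := by
  have hle : Λ.d α ⊔ Λ.d μ ≤ Λ.d (Λ.comp α ρ) := by
    refine sup_le ?_ ?_
    · rw [Λ.d_comp _ _ hαρ]; exact le_self_add
    · rw [h, Λ.d_comp _ _ hμσ]; exact le_self_add
  obtain ⟨τ, t, hτt, hτ, hdτ, -⟩ :=
    Λ.exists_factor (Λ.comp α ρ) (add_tsub_cancel_of_le hle).symm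
  obtain ⟨u, hαu, rfl, hut, hρ⟩ :=
    exists_comp_eq_of_comp_eq_comp hαρ hτt hτ.symm (hdτ ▸ le_sup_left)
  obtain ⟨w, hμw, hw, -, -⟩ :=
    exists_comp_eq_of_comp_eq_comp hμσ hτt (hτ.trans h).symm (hdτ ▸ le_sup_right)
  exact ⟨(u, w), ⟨hαu, hμw, hw.symm, hdτ⟩, t, hut, hρ⟩

theorem exhaustive_extSet {η : Λ.Mor} {E : Set Λ.Mor} (hE : Λ.Exhaustive (Λ.r η) E) :
    Λ.Exhaustive (Λ.s η) (Λ.ExtSet η E) := by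
  constructor
  · simp only [ExtSet, Set.mem_iUnion]
    rintro α ⟨lam, -, β, hαβ⟩
    exact hαβ.1.symm
  · intro μ hμ
    have hημ : Λ.s η = Λ.r μ := hμ.symm
    obtain ⟨lam, hlam, ⟨g, h⟩, hlg, hημh, hgh, -⟩ :=
      hE.2 (Λ.comp η μ) (Λ.r_comp _ _ hημ)
    have hμh : Λ.s μ = Λ.r h := by rwa [← Λ.s_comp _ _ hημ]
    obtain ⟨⟨α, β⟩, hαβ, t, hαt, hα⟩ := exists_minExt_of_comp_eq_s7
      (by rwa [Λ.r_comp _ _ hμh]) hlg ((Λ.comp_assoc _ _ _ hημ hμh).symm.trans hgh.symm)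
    obtain ⟨q, hq, -⟩ := exists_minExt_of_comp_eq_s7 hαt hμh hα
    exact ⟨α, Set.mem_biUnion hlam ⟨β, hαβ⟩, q, hq⟩

theorem FinitelyAligned.finite_extSet (hΛ : Λ.FinitelyAligned) (η : Λ.Mor) {E : Set Λ.Mor}
    (hE : E.Finite) : (Λ.ExtSet η E).Finite :=
  hE.biUnion fun lam _ =>
    ((hΛ η lam).image Prod.fst).subset fun α ⟨β, hαβ⟩ => ⟨(α, β), hαβ, rfl⟩

/-- `μ = τ(p, q)`. -/
def IsSegment (τ : Λ.Mor) (p q : Fin k → ℕ) (μ : Λ.Mor) : Prop :=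
  ∃ α γ : Λ.Mor, Λ.s α = Λ.r μ ∧ Λ.s μ = Λ.r γ ∧ Λ.comp α (Λ.comp μ γ) = τ ∧
    Λ.d α = p ∧ p + Λ.d μ = q

open Classical in
noncomputable def segment (τ : Λ.Mor) (p q : Fin k → ℕ) : Λ.Mor :=
  if h : ∃ μ, Λ.IsSegment τ p q μ then h.choose else Λ.ide (Λ.r τ)

namespace IsSegment

variable {τ μ μ' : Λ.Mor} {p q r : Fin k → ℕ}

theorem d_eq (h : Λ.IsSegment τ p q μ) : Λ.d μ = q - p := by
  obtain ⟨-, -, -, -, -, -, hq⟩ := h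
  rw [← hq, add_tsub_cancel_left]

theorem unique (h : Λ.IsSegment τ p q μ) (h' : Λ.IsSegment τ p q μ') : μ = μ' := by
  have hd : Λ.d μ = Λ.d μ' := by rw [h.d_eq, h'.d_eq]
  obtain ⟨α, γ, hαμ, hμγ, hτ, hα, -⟩ := h
  obtain ⟨α', γ', hαμ', hμγ', hτ', hα', -⟩ := h'
  obtain ⟨-, hμ⟩ := eq_and_eq_of_comp_eq (by rwa [Λ.r_comp _ _ hμγ])
    (by rwa [Λ.r_comp _ _ hμγ']) (hτ.trans hτ'.symm) (hα.trans hα'.symm)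
  exact (eq_and_eq_of_comp_eq hμγ hμγ' hμ hd).1

theorem segment_eq (h : Λ.IsSegment τ p q μ) : Λ.segment τ p q = μ := by
  have hex : ∃ μ, Λ.IsSegment τ p q μ := ⟨μ, h⟩
  rw [segment, dif_pos hex]
  exact hex.choose_spec.unique h

theorem comp (h₁ : Λ.IsSegment τ p q μ) (h₂ : Λ.IsSegment τ q r μ') :
    Λ.IsSegment τ p r (Λ.comp μ μ') := by
  obtain ⟨α, γ, hαμ, hμγ, hτ, hα, hq⟩ := h₁
  obtain ⟨α', γ', hαμ', hμγ', hτ', hα', hr⟩ := h₂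
  obtain ⟨-, hγ⟩ := eq_and_eq_of_comp_eq (μ₁ := α') (μ₂ := Λ.comp α μ)
    (by rwa [Λ.r_comp _ _ hμγ']) (by rwa [Λ.s_comp _ _ hαμ])
    (hτ'.trans (hτ.symm.trans (Λ.comp_assoc _ _ _ hαμ hμγ).symm))
    (by rw [Λ.d_comp _ _ hαμ, hα, hq, hα'])
  have hμμ' : Λ.s μ = Λ.r μ' := by rw [hμγ, ← hγ, Λ.r_comp _ _ hμγ']
  refine ⟨α, γ', by rwa [Λ.r_comp _ _ hμμ'], by rwa [Λ.s_comp _ _ hμμ'], ?_, hα, ?_⟩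
  · rw [Λ.comp_assoc _ _ _ hμμ' hμγ', hγ, hτ]
  · rw [Λ.d_comp _ _ hμμ', ← add_assoc, hq, hr]

theorem comp_right (h : Λ.IsSegment τ p q μ) {ρ : Λ.Mor} (hτρ : Λ.s τ = Λ.r ρ) :
    Λ.IsSegment (Λ.comp τ ρ) p q μ := by
  obtain ⟨α, γ, hαμ, hμγ, rfl, hα, hq⟩ := h
  have hγρ : Λ.s γ = Λ.r ρ := by rwa [Λ.s_comp _ _ (by rwa [Λ.r_comp _ _ hμγ]),
    Λ.s_comp _ _ hμγ] at hτρ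
  refine ⟨α, Λ.comp γ ρ, hαμ, by rwa [Λ.r_comp _ _ hγρ], ?_, hα, hq⟩
  rw [Λ.comp_assoc _ _ _ (by rwa [Λ.r_comp _ _ hμγ]) (by rwa [Λ.s_comp _ _ hμγ]),
    Λ.comp_assoc _ _ _ hμγ hγρ]

theorem comp_left (h : Λ.IsSegment τ p q μ) {σ : Λ.Mor} (hστ : Λ.s σ = Λ.r τ) :
    Λ.IsSegment (Λ.comp σ τ) (Λ.d σ + p) (Λ.d σ + q) μ := by
  obtain ⟨α, γ, hαμ, hμγ, rfl, hα, hq⟩ := h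
  have hσα : Λ.s σ = Λ.r α := by rwa [Λ.r_comp _ _ (by rwa [Λ.r_comp _ _ hμγ])] at hστ
  refine ⟨Λ.comp σ α, γ, by rwa [Λ.s_comp _ _ hσα], hμγ, ?_, ?_, ?_⟩
  · rw [Λ.comp_assoc _ _ _ hσα (by rwa [Λ.r_comp _ _ hμγ])]
  · rw [Λ.d_comp _ _ hσα, hα]
  · rw [add_assoc, hq]

theorem ide_r (h : Λ.IsSegment τ p q μ) : Λ.IsSegment τ p p (Λ.ide (Λ.r μ)) := by
  obtain ⟨α, γ, hαμ, hμγ, hτ, hα, -⟩ := h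
  refine ⟨α, Λ.comp μ γ, by rw [Λ.r_ide, hαμ], by rw [Λ.s_ide, Λ.r_comp _ _ hμγ], ?_, hα, ?_⟩
  · rw [← Λ.r_comp _ _ hμγ, Λ.ide_comp, hτ]
  · rw [Λ.d_ide, add_zero]

theorem ide_s (h : Λ.IsSegment τ p q μ) : Λ.IsSegment τ q q (Λ.ide (Λ.s μ)) := by
  obtain ⟨α, γ, hαμ, hμγ, hτ, hα, hq⟩ := h
  refine ⟨Λ.comp α μ, γ, by rw [Λ.r_ide, Λ.s_comp _ _ hαμ], by rw [Λ.s_ide, hμγ], ?_, ?_, ?_⟩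
  · rw [hμγ, Λ.ide_comp, Λ.comp_assoc _ _ _ hαμ hμγ, hτ]
  · rw [Λ.d_comp _ _ hαμ, hα, hq]
  · rw [Λ.d_ide, add_zero]

theorem r_eq (h : Λ.IsSegment τ 0 q μ) : Λ.r μ = Λ.r τ := by
  obtain ⟨α, γ, hαμ, hμγ, rfl, hα, -⟩ := h
  rw [Λ.r_comp _ _ (by rwa [Λ.r_comp _ _ hμγ]), ← hαμ, s_eq_r_of_d_eq_zero hα]

end IsSegment

theorem isSegment_segment (τ : Λ.Mor) {p q : Fin k → ℕ} (hpq : p ≤ q) (hq : q ≤ Λ.d τ) :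
    Λ.IsSegment τ p q (Λ.segment τ p q) := by
  have hτ : Λ.d τ = p + ((q - p) + (Λ.d τ - q)) := by
    rw [← add_assoc, add_tsub_cancel_of_le hpq, add_tsub_cancel_of_le hq]
  obtain ⟨α, ν, hαν, rfl, hα, hν⟩ := Λ.exists_factor τ hτ
  obtain ⟨μ, γ, hμγ, rfl, hμ, -⟩ := Λ.exists_factor ν hν
  have hμ : Λ.IsSegment (Λ.comp α (Λ.comp μ γ)) p q μ :=
    ⟨α, γ, by rwa [Λ.r_comp _ _ hμγ] at hαν, hμγ, rfl, hα, by rw [hμ, add_tsub_cancel_of_le hpq]⟩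
  rw [hμ.segment_eq]
  exact hμ

end KGraph

namespace KPath

open KGraph

variable {k : ℕ} {Λ : KGraph k}

theorem ext {x y : KPath Λ} (hdeg : x.deg = y.deg) (hvert : x.vert = y.vert)
    (hseg : x.seg = y.seg) : x = y := by
  cases x; cases y
  cases hdeg; cases hvert; cases hseg
  rfl

theorem DegLe.mono {x : KPath Λ} {a b : Fin k → ℕ} (hab : a ≤ b) (h : x.DegLe b) :
    x.DegLe a :=
  fun i => (Nat.cast_le.mpr (hab i)).trans (h i)

theorem DegLe.sup {x : KPath Λ} {a b : Fin k → ℕ} (ha : x.DegLe a) (hb : x.DegLe b) :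
    x.DegLe (a ⊔ b) :=
  fun i => by exact_mod_cast max_le (ha i) (hb i)

theorem degLe_tsub_iff {x : KPath Λ} {a q : Fin k → ℕ} :
    x.DegLe (q - a) ↔ ∀ i, (q i : ℕ∞) ≤ a i + x.deg i :=
  forall_congr' fun i => by rw [Pi.sub_apply, ENat.natCast_sub, tsub_le_iff_left]

theorem degLe_shift_iff {x : KPath Λ} {a b : Fin k → ℕ} (ha : x.DegLe a) :
    (x.shift a ha).DegLe b ↔ x.DegLe (a + b) :=
  forall_congr' fun i => by
    rw [Pi.add_apply, Nat.cast_add]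
    exact (ENat.addLECancellable_natCast _).le_tsub_iff_left (ha i)

theorem shift_shift (x : KPath Λ) {a b c : Fin k → ℕ} (ha : x.DegLe a)
    (hb : (x.shift a ha).DegLe b) (hc : x.DegLe c) (habc : a + b = c) :
    (x.shift a ha).shift b hb = x.shift c hc := by
  subst habc
  refine ext ?_ ?_ ?_
  · funext i
    show x.deg i - a i - b i = x.deg i - ((a + b) i : ℕ)
    rw [tsub_tsub, Pi.add_apply, Nat.cast_add]
  · funext p
    show x.vert (a + (b + p)) = x.vert (a + b + p)
    rw [add_assoc]
  · funext p q
    show x.seg (a + (b + p)) (a + (b + q)) = x.seg (a + b + p) (a + b + q)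
    rw [add_assoc, add_assoc]

theorem shiftsEq_sup_tsub {z y : KPath Λ} {m n : Fin k → ℕ} (hmn : z.DegLe (m ⊔ n))
    {hm : z.DegLe m} {hn : z.DegLe n} (hzm : z.shift m hm = y) (hzn : z.shift n hn = y) :
    y.ShiftsEq (m ⊔ n - m) (m ⊔ n - n) := by
  have hm' : (z.shift m hm).DegLe (m ⊔ n - m) :=
    (degLe_shift_iff hm).2 (by rwa [add_tsub_cancel_of_le le_sup_left])
  have hn' : (z.shift n hn).DegLe (m ⊔ n - n) :=
    (degLe_shift_iff hn).2 (by rwa [add_tsub_cancel_of_le le_sup_right])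
  refine ⟨hzm ▸ hm', hzn ▸ hn', ?_⟩
  calc y.shift _ (hzm ▸ hm') = (z.shift m hm).shift _ hm' := by subst hzm; rfl
    _ = z.shift (m ⊔ n) hmn := shift_shift z hm hm' hmn (add_tsub_cancel_of_le le_sup_left)
    _ = (z.shift n hn).shift _ hn' :=
      (shift_shift z hn hn' hmn (add_tsub_cancel_of_le le_sup_right)).symm
    _ = y.shift _ (hzn ▸ hn') := by subst hzn; rfl

theorem isSegment_seg (x : KPath Λ) {p q r : Fin k → ℕ} (hpq : p ≤ q) (hqr : q ≤ r)
    (hr : x.DegLe r) : Λ.IsSegment (x.seg 0 r) p q (x.seg p q) := by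
  have hq := hr.mono hqr
  have hp := hq.mono hpq
  refine ⟨x.seg 0 p, x.seg q r, ?_, ?_, ?_, ?_, ?_⟩
  · rw [x.s_seg _ _ zero_le hp, x.r_seg _ _ hpq hq]
  · rw [x.s_seg _ _ hpq hq, x.r_seg _ _ hqr hr]
  · rw [x.comp_seg _ _ _ hpq hqr hr, x.comp_seg _ _ _ zero_le (hpq.trans hqr) hr]
  · rw [x.d_seg _ _ zero_le hp, tsub_zero]
  · rw [x.d_seg _ _ hpq hq, add_tsub_cancel_of_le hpq]

theorem seg_eq_of_seg_eq_comp (x : KPath Λ) {p r : Fin k → ℕ} {lam β : Λ.Mor}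
    (hr : x.DegLe r) (hpr : p + Λ.d lam ≤ r) (hlamβ : Λ.s lam = Λ.r β)
    (h : x.seg p r = Λ.comp lam β) : x.seg p (p + Λ.d lam) = lam := by
  have hp : x.DegLe (p + Λ.d lam) := hr.mono hpr
  refine (eq_and_eq_of_comp_eq ?_ hlamβ ((x.comp_seg _ _ _ le_self_add hpr hr).trans h) ?_).1
  · rw [x.s_seg _ _ le_self_add hp, x.r_seg _ _ hpr hr]
  · rw [x.d_seg _ _ le_self_add hp, add_tsub_cancel_left]

theorem isBoundary_of_shift (hΛ : Λ.FinitelyAligned) {z : KPath Λ} {a : Fin k → ℕ}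
    (ha : z.DegLe a) (hz : (z.shift a ha).IsBoundary) : z.IsBoundary := by
  intro p hp E hE hEx
  have hpq : p ≤ p ⊔ a := le_sup_left
  have hq : z.DegLe (p ⊔ a) := hp.sup ha
  have haq : a + (p ⊔ a - a) = p ⊔ a := add_tsub_cancel_of_le le_sup_right
  set η := z.seg p (p ⊔ a)
  have hrη : Λ.r η = z.vert p := z.r_seg _ _ hpq hq
  have hsη : Λ.s η = (z.shift a ha).vert (p ⊔ a - a) :=
    (z.s_seg _ _ hpq hq).trans (congrArg z.vert haq.symm)
  obtain ⟨α, hαF, hαdeg, hα⟩ := hz _ ((degLe_shift_iff ha).2 (haq ▸ hq)) _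
    (hΛ.finite_extSet η hE) (hsη ▸ exhaustive_extSet (hrη ▸ hEx))
  obtain ⟨lam, hlam, β, hsηα, hlamβ, hηα, hd⟩ := Set.mem_iUnion₂.1 hαF
  set r := p ⊔ a + Λ.d α
  have hr : z.DegLe r := by
    have := (degLe_shift_iff ha).1 hαdeg
    rwa [← add_assoc, haq] at this
  have hα' : z.seg (p ⊔ a) r = α := by
    have : z.seg (a + (p ⊔ a - a)) (a + (p ⊔ a - a + Λ.d α)) = α := hα
    rwa [← add_assoc, haq] at this
  have hpr : p + Λ.d lam ≤ r := by
    have hdη : Λ.d η = p ⊔ a - p := z.d_seg _ _ hpq hq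
    have hle : Λ.d lam ≤ Λ.d η + Λ.d α := by
      rw [← Λ.d_comp _ _ hsηα, hd]
      exact le_sup_right
    calc p + Λ.d lam ≤ p + (p ⊔ a - p + Λ.d α) := add_le_add_right (hdη ▸ hle) p
      _ = r := by rw [← add_assoc, add_tsub_cancel_of_le hpq]
  refine ⟨lam, hlam, hr.mono hpr, z.seg_eq_of_seg_eq_comp hr hpr hlamβ ?_⟩
  rw [← z.comp_seg p (p ⊔ a) r hpq le_self_add hr, hα', hηα]

section Cons

variable (lam : Λ.Mor) (y : KPath Λ)

def consBase (q : Fin k → ℕ) : Λ.Mor := Λ.comp lam (y.seg 0 (q - Λ.d lam))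

open Classical in
/-- The segment `(λ y)(p, q)`: taken from `y` itself when `d λ ≤ p`, so that `σ^{d λ} (λ y) = y`
holds on the nose, junk values included. -/
noncomputable def consSeg (p q : Fin k → ℕ) : Λ.Mor :=
  if Λ.d lam ≤ p then y.seg (p - Λ.d lam) (q - Λ.d lam)
  else Λ.segment (consBase lam y q) p q

open Classical in
noncomputable def consVert (p : Fin k → ℕ) : Λ.Obj :=
  if Λ.d lam ≤ p then y.vert (p - Λ.d lam) else Λ.r (consSeg lam y p p)

variable {lam y} {p q r : Fin k → ℕ}

theorem s_consBase (hq : y.DegLe (q - Λ.d lam)) (hly : Λ.s lam = y.vert 0) :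
    Λ.s (consBase lam y q) = y.vert (q - Λ.d lam) := by
  rw [consBase, Λ.s_comp _ _ (hly.trans (y.r_seg _ _ zero_le hq).symm),
    y.s_seg _ _ zero_le hq]

theorem d_consBase (hq : y.DegLe (q - Λ.d lam)) (hly : Λ.s lam = y.vert 0) :
    Λ.d (consBase lam y q) = Λ.d lam + (q - Λ.d lam) := by
  rw [consBase, Λ.d_comp _ _ (hly.trans (y.r_seg _ _ zero_le hq).symm),
    y.d_seg _ _ zero_le hq, tsub_zero]

theorem consBase_eq_comp (hqr : q ≤ r) (hr : y.DegLe (r - Λ.d lam)) (hly : Λ.s lam = y.vert 0) :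
    consBase lam y r =
      Λ.comp (consBase lam y q) (y.seg (q - Λ.d lam) (r - Λ.d lam)) := by
  have hqr' : q - Λ.d lam ≤ r - Λ.d lam := tsub_le_tsub_right hqr _
  have hq := hr.mono hqr'
  rw [consBase, consBase, Λ.comp_assoc _ _ _ (hly.trans (y.r_seg _ _ zero_le hq).symm)
    ((y.s_seg _ _ zero_le hq).trans (y.r_seg _ _ hqr' hr).symm),
    y.comp_seg _ _ _ zero_le hqr' hr]

theorem isSegment_consSeg (hpq : p ≤ q) (hq : y.DegLe (q - Λ.d lam))
    (hly : Λ.s lam = y.vert 0) : Λ.IsSegment (consBase lam y q) p q (consSeg lam y p q) := by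
  unfold consSeg
  split_ifs with hp
  · have := (y.isSegment_seg (tsub_le_tsub_right hpq _) le_rfl hq).comp_left
      (hly.trans (y.r_seg _ _ zero_le hq).symm)
    rwa [add_tsub_cancel_of_le hp, add_tsub_cancel_of_le (hp.trans hpq)] at this
  · exact Λ.isSegment_segment _ hpq (by rw [d_consBase hq hly]; exact le_add_tsub)

theorem isSegment_consSeg_of_le (hpq : p ≤ q) (hqr : q ≤ r) (hr : y.DegLe (r - Λ.d lam))
    (hly : Λ.s lam = y.vert 0) : Λ.IsSegment (consBase lam y r) p q (consSeg lam y p q) := by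
  have hq := hr.mono (tsub_le_tsub_right hqr _)
  rw [consBase_eq_comp hqr hr hly]
  exact (isSegment_consSeg hpq hq hly).comp_right
    (by rw [s_consBase hq hly, y.r_seg _ _ (tsub_le_tsub_right hqr _) hr])

theorem consVert_eq_r (hp : y.DegLe (p - Λ.d lam)) :
    consVert lam y p = Λ.r (consSeg lam y p p) := by
  unfold consVert
  split_ifs with h
  · rw [consSeg, if_pos h, y.r_seg _ _ le_rfl hp]
  · rfl

theorem r_consSeg (hpq : p ≤ q) (hq : y.DegLe (q - Λ.d lam)) (hly : Λ.s lam = y.vert 0) :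
    Λ.r (consSeg lam y p q) = consVert lam y p := by
  rw [consVert_eq_r (hq.mono (tsub_le_tsub_right hpq _)),
    (isSegment_consSeg_of_le le_rfl hpq hq hly).unique (isSegment_consSeg hpq hq hly).ide_r,
    Λ.r_ide]

theorem s_consSeg (hpq : p ≤ q) (hq : y.DegLe (q - Λ.d lam)) (hly : Λ.s lam = y.vert 0) :
    Λ.s (consSeg lam y p q) = consVert lam y q := by
  rw [consVert_eq_r hq,
    (isSegment_consSeg le_rfl hq hly).unique (isSegment_consSeg hpq hq hly).ide_s, Λ.r_ide]

theorem comp_consSeg (hpq : p ≤ q) (hqr : q ≤ r) (hr : y.DegLe (r - Λ.d lam))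
    (hly : Λ.s lam = y.vert 0) :
    Λ.comp (consSeg lam y p q) (consSeg lam y q r) = consSeg lam y p r :=
  ((isSegment_consSeg_of_le hpq hqr hr hly).comp (isSegment_consSeg hqr hr hly)).unique
    (isSegment_consSeg (hpq.trans hqr) hr hly)

/-- The path `λ y`. -/
noncomputable def cons (lam : Λ.Mor) (y : KPath Λ) (hly : Λ.s lam = y.vert 0) : KPath Λ where
  deg i := Λ.d lam i + y.deg i
  vert := consVert lam y
  seg := consSeg lam y
  r_seg _ _ hpq hq := r_consSeg hpq (degLe_tsub_iff.2 hq) hly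
  s_seg _ _ hpq hq := s_consSeg hpq (degLe_tsub_iff.2 hq) hly
  d_seg _ _ hpq hq := (isSegment_consSeg hpq (degLe_tsub_iff.2 hq) hly).d_eq
  comp_seg _ _ _ hpq hqr hr := comp_consSeg hpq hqr (degLe_tsub_iff.2 hr) hly

variable (hly : Λ.s lam = y.vert 0)

theorem cons_vert_zero : (cons lam y hly).vert 0 = Λ.r lam := by
  show consVert lam y 0 = Λ.r lam
  unfold consVert
  split_ifs with h
  · rw [zero_tsub, ← hly, s_eq_r_of_d_eq_zero (le_antisymm h zero_le)]
  · have h0 : y.DegLe (0 - Λ.d lam) := fun i => by simp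
    rw [(isSegment_consSeg le_rfl h0 hly).r_eq, consBase,
      Λ.r_comp _ _ (hly.trans (y.r_seg _ _ zero_le h0).symm)]

theorem cons_degLe : (cons lam y hly).DegLe (Λ.d lam) := fun _ => le_self_add

theorem shift_cons (h : (cons lam y hly).DegLe (Λ.d lam)) :
    (cons lam y hly).shift (Λ.d lam) h = y := by
  refine ext ?_ ?_ ?_
  · funext i
    exact (ENat.addLECancellable_natCast _).add_tsub_cancel_left
  · funext p
    show consVert lam y (Λ.d lam + p) = y.vert p
    rw [consVert, if_pos le_self_add, add_tsub_cancel_left]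
  · funext p q
    show consSeg lam y (Λ.d lam + p) (Λ.d lam + q) = y.seg p q
    rw [consSeg, if_pos le_self_add, add_tsub_cancel_left, add_tsub_cancel_left]

end Cons

end KPath

theorem stmt7_general {k : ℕ} (Λ : KGraph k) (hFA : Λ.FinitelyAligned)
    (v : Λ.Obj) (n m : Fin k → ℕ)
    (hLP : Λ.LocalPeriodicity v n m)
    (x : KPath Λ) (hxdeg : ∀ i, x.deg i = ⊤) (hxv : x.vert 0 = v)
    (y : KPath Λ) (hy : y.IsBoundary) (hyr : y.vert 0 = x.vert n) :
    y.ShiftsEq (m ⊔ n - m) (m ⊔ n - n) := by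
  have hn : x.DegLe n := fun i => by rw [hxdeg i]; exact le_top
  obtain ⟨lam, hly, hlam, rfl⟩ : ∃ lam, Λ.s lam = y.vert 0 ∧ Λ.r lam = v ∧ Λ.d lam = n :=
    ⟨x.seg 0 n, (x.s_seg _ _ zero_le hn).trans hyr.symm, (x.r_seg _ _ zero_le hn).trans hxv,
      by rw [x.d_seg _ _ zero_le hn, tsub_zero]⟩
  set z := KPath.cons lam y hly
  have hzy : ∀ h, z.shift (Λ.d lam) h = y := KPath.shift_cons hly
  have hz : z.IsBoundary := KPath.isBoundary_of_shift hFA (KPath.cons_degLe hly)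
    ((hzy _).symm ▸ hy)
  obtain ⟨hmn, hn', hm', hnm⟩ := hLP z hz ((KPath.cons_vert_zero hly).trans hlam)
  exact KPath.shiftsEq_sup_tsub hmn (hnm.symm.trans (hzy hn')) (hzy hn')

theorem stmt7 {k : ℕ} (Λ : KGraph k) (hFA : Λ.FinitelyAligned)
    (hNS : Λ.NoSources) (v : Λ.Obj) (n m : Fin k → ℕ)
    (hLP : Λ.LocalPeriodicity v n m)
    (x : KPath Λ) (hxdeg : ∀ i, x.deg i = ⊤) (hxv : x.vert 0 = v)
    (y : KPath Λ) (hy : y.IsBoundary) (hyr : y.vert 0 = x.vert n)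
    (hdy : y.DegLe ((m ⊔ n - m) ⊔ (m ⊔ n - n))) :
    y.ShiftsEq (m ⊔ n - m) (m ⊔ n - n) :=
  stmt7_general Λ hFA v n m hLP x hxdeg hxv y hy hyr
end
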